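/- Let β > 1, w ∈ Σ_β^n, and write w = u ε₁⋯ε_{l−1}wₙ in its canonical decomposition (with suffix w* = ε₁⋯ε_{l−1}wₙ where wₙ ≤ ε_l as in the structure theorem). Then w is full if and only if w* is full, which holds if and only if wₙ < ε_l. -/

import Mathlib

noncomputable def Tb (β x : ℝ) : ℝ := β * x - ⌊β * x⌋

/-- The (i+1)-th digit of the β-expansion of x (0-indexed). -/
noncomputable def dig (β x : ℝ) (i : ℕ) : ℕ := (⌊β * (Tb β)^[i] x⌋).toNat

/-- w is an admissible word for base β. -/
def Adm (β : ℝ) (w : List ℕ) : Prop :=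
  ∃ x, x ∈ Set.Ico (0:ℝ) 1 ∧ ∀ i (h : i < w.length), w[i] = dig β x i

/-- u is an admissible digit sequence for base β. -/
def AdmSeq (β : ℝ) (u : ℕ → ℕ) : Prop :=
  ∃ x, x ∈ Set.Ico (0:ℝ) 1 ∧ ∀ i, u i = dig β x i

/-- The cylinder I(w) ⊆ [0,1). -/
def cyl (β : ℝ) (w : List ℕ) : Set ℝ :=
  {x | x ∈ Set.Ico (0:ℝ) 1 ∧ ∀ i (h : i < w.length), w[i] = dig β x i}

/-- w is a full word: T_β^{|w|} maps I(w) onto [0,1). -/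
def Full (β : ℝ) (w : List ℕ) : Prop :=
  (Tb β)^[w.length] '' cyl β w = Set.Ico 0 1

/-- The β-expansion of 1 is finite with length M. -/
def FiniteLen (β : ℝ) (M : ℕ) : Prop :=
  0 < M ∧ dig β 1 (M-1) ≠ 0 ∧ ∀ j, M ≤ j → dig β 1 j = 0

open Classical in
/-- The (i+1)-th digit of the modified β-expansion ε*(1,β) (0-indexed). -/
noncomputable def modExp (β : ℝ) (i : ℕ) : ℕ :=
  if h : ∃ M, FiniteLen β M then
    (if (i+1) % (Nat.find h) = 0 then dig β 1 (Nat.find h - 1) - 1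
     else dig β 1 (i % Nat.find h))
  else dig β 1 i

/-- View a finite word as the sequence w0^∞. -/
def wordSeq (w : List ℕ) (i : ℕ) : ℕ := w.getD i 0

/-- Strict lexicographic order on sequences. -/
def seqLt (u v : ℕ → ℕ) : Prop := ∃ k, (∀ i, i < k → u i = v i) ∧ u k < v k

/-- Strict lexicographic order on finite words (identified with w0^∞). -/
def wlt (u v : List ℕ) : Prop := seqLt (wordSeq u) (wordSeq v)

/-- Concatenation of a finite word with a sequence. -/
def catSeq (w : List ℕ) (u : ℕ → ℕ) (i : ℕ) : ℕ :=
  if h : i < w.length then w[i] else u (i - w.length)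

open Classical in
/-- The largest position k ≤ s with ε_k ≠ 0 (greedy step). -/
noncomputable def greedyStep (β : ℝ) (s : ℕ) : ℕ :=
  Nat.findGreatest (fun k => 1 ≤ k ∧ dig β 1 (k-1) ≠ 0) s

/-- τ_β(s): number of terms in the greedy representation of s by nonzero positions. -/
noncomputable def tau (β : ℝ) : ℕ → ℕ
  | 0 => 0
  | s + 1 => tau β (s - (greedyStep β (s+1) - 1)) + 1
decreasing_by omega

open Classical in
/-- r_s(β): maximal length of a string of 0's in ε₁*⋯ε_s*. -/
noncomputable def rrun (β : ℝ) (s : ℕ) : ℕ :=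
  Nat.findGreatest (fun k => 1 ≤ k ∧ ∃ i, i + k ≤ s ∧ ∀ t, t < k → modExp β (i + t) = 0) s

/-- v is the immediate successor of u in the lexicographic order on Σ_β^n. -/
def SuccIn (β : ℝ) (n : ℕ) (u v : List ℕ) : Prop :=
  u.length = n ∧ v.length = n ∧ Adm β u ∧ Adm β v ∧ wlt u v ∧
  ¬ ∃ z : List ℕ, z.length = n ∧ Adm β z ∧ wlt u z ∧ wlt z v

/-- There is a run of l consecutive non-full words in Σ_β^n. -/
def NonFullRun (β : ℝ) (n l : ℕ) : Prop :=
  ∃ f : ℕ → List ℕ,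
    (∀ j, j < l → (f j).length = n ∧ Adm β (f j) ∧ ¬ Full β (f j)) ∧
    (∀ j, j + 1 < l → SuccIn β n (f j) (f (j+1)))

/-- There is a maximal run of l consecutive non-full words in Σ_β^n. -/
def MaxNonFullRun (β : ℝ) (n l : ℕ) : Prop :=
  0 < l ∧ ∃ f : ℕ → List ℕ,
    (∀ j, j < l → (f j).length = n ∧ Adm β (f j) ∧ ¬ Full β (f j)) ∧
    (∀ j, j + 1 < l → SuccIn β n (f j) (f (j+1))) ∧
    (∀ u, SuccIn β n u (f 0) → Full β u) ∧
    (∀ u, SuccIn β n (f (l-1)) u → Full β u)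

/-- There is a maximal run of l consecutive full words in Σ_β^n. -/
def MaxFullRun (β : ℝ) (n l : ℕ) : Prop :=
  0 < l ∧ ∃ f : ℕ → List ℕ,
    (∀ j, j < l → (f j).length = n ∧ Adm β (f j) ∧ Full β (f j)) ∧
    (∀ j, j + 1 < l → SuccIn β n (f j) (f (j+1))) ∧
    (∀ u, SuccIn β n u (f 0) → ¬ Full β u) ∧
    (∀ u, SuccIn β n (f (l-1)) u → ¬ Full β u)

/-- The canonical decomposition of an admissible word, as in the structure theorem:
p.1 is the list of block lengths k₁,…,k_p and p.2 is the final length l. -/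
def Decomp (β : ℝ) (w : List ℕ) (p : List ℕ × ℕ) : Prop :=
  1 ≤ p.2 ∧ (∀ k ∈ p.1, 1 ≤ k) ∧ p.1.sum + p.2 = w.length ∧
  (∀ j, j < p.1.length →
    (∀ t, t < p.1.getD j 0 - 1 → w.getD ((p.1.take j).sum + t) 0 = dig β 1 t) ∧
    w.getD ((p.1.take j).sum + (p.1.getD j 0 - 1)) 0 < dig β 1 (p.1.getD j 0 - 1)) ∧
  (∀ t, t < p.2 - 1 → w.getD (p.1.sum + t) 0 = dig β 1 t) ∧
  w.getD (p.1.sum + (p.2 - 1)) 0 ≤ dig β 1 (p.2 - 1)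

/-!
A prefix `u` with `T^|u|(I(u)) = [0,1)` can be peeled off: `T^|u|` maps `I(u w*)` onto `I(w*)`,
so `u w*` and `w*` are full together. For `w* = ε₁⋯ε_{l-1}a`, the map `T^l` is strictly increasing
along points sharing their first `l` digits. If `a = ε_l`, every `x ∈ I(w*)` shares `l` digits with `1`
and `x < 1`, so `T^l x < T^l 1`, and the point `T^l 1 ∈ [0,1)` is missed. If `a < ε_l`, every
`y ∈ [0,1)` has the preimage obtained by prepending the digits `ε₁, …, ε_{l-1}, a` to `y`, which
stays below `1` and hence lies in `I(w*)`.
-/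

open Set

section Transformation

variable {β x : ℝ}

lemma Tb_mem_Ico (β x : ℝ) : Tb β x ∈ Ico (0 : ℝ) 1 :=
  ⟨Int.fract_nonneg _, Int.fract_lt_one _⟩

lemma iterate_Tb_mem_Ico (hx : x ∈ Ico (0 : ℝ) 1) : ∀ n, (Tb β)^[n] x ∈ Ico (0 : ℝ) 1
  | 0 => hx
  | n + 1 => by rw [Function.iterate_succ_apply']; exact Tb_mem_Ico β _

lemma iterate_Tb_nonneg (hx : 0 ≤ x) : ∀ n, 0 ≤ (Tb β)^[n] x
  | 0 => hx
  | n + 1 => by rw [Function.iterate_succ_apply']; exact (Tb_mem_Ico β _).1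

lemma dig_add (β x : ℝ) (k i : ℕ) : dig β x (k + i) = dig β ((Tb β)^[k] x) i := by
  simp only [dig, ← Function.iterate_add_apply, Nat.add_comm i k]

lemma dig_succ (β x : ℝ) (i : ℕ) : dig β x (i + 1) = dig β (Tb β x) i := by
  rw [Nat.add_comm, dig_add, Function.iterate_one]

lemma mul_eq_dig_add_Tb (hβ : 0 ≤ β) (hx : 0 ≤ x) : β * x = dig β x 0 + Tb β x := by
  have hfloor : 0 ≤ ⌊β * x⌋ := Int.floor_nonneg.2 (mul_nonneg hβ hx)
  have hdig : (dig β x 0 : ℤ) = ⌊β * x⌋ := by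
    simp only [dig, Function.iterate_zero, id_eq, Int.toNat_of_nonneg hfloor]
  rw [Tb, ← hdig]
  push_cast
  ring

lemma iterate_Tb_succ (hβ : 0 ≤ β) (hx : 0 ≤ x) (n : ℕ) :
    (Tb β)^[n + 1] x = β * (Tb β)^[n] x - dig β x n := by
  rw [mul_eq_dig_add_Tb hβ (iterate_Tb_nonneg hx n), ← dig_add, add_zero,
    Function.iterate_succ_apply', add_sub_cancel_left]

lemma dig_zero_div_and_Tb_div (hβ : 0 < β) (c : ℕ) {y : ℝ} (hy : y ∈ Ico (0 : ℝ) 1) :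
    dig β ((c + y) / β) 0 = c ∧ Tb β ((c + y) / β) = y := by
  have hmul : β * ((c + y) / β) = c + y := mul_div_cancel₀ _ hβ.ne'
  have hfloor : ⌊β * ((c + y) / β)⌋ = c := by
    rw [hmul, Int.floor_eq_iff]
    constructor <;> push_cast <;> linarith [hy.1, hy.2]
  refine ⟨?_, ?_⟩
  · simp only [dig, Function.iterate_zero, id_eq, hfloor, Int.toNat_natCast]
  · rw [Tb, hfloor, hmul]
    push_cast
    ring

end Transformation

section Monotonicity

variable {β : ℝ}

lemma iterate_Tb_lt_of_dig_eq (hβ : 0 < β) {x z : ℝ} (hx : 0 ≤ x) (hz : 0 ≤ z) (hxz : x < z) :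
    ∀ l, (∀ i < l, dig β x i = dig β z i) → (Tb β)^[l] x < (Tb β)^[l] z
  | 0, _ => hxz
  | n + 1, hd => by
    rw [iterate_Tb_succ hβ.le hx, iterate_Tb_succ hβ.le hz, hd n n.lt_succ_self]
    have := iterate_Tb_lt_of_dig_eq hβ hx hz hxz n fun i hi => hd i (hi.trans n.lt_succ_self)
    gcongr

lemma exists_lt_dig_eq_iterate_Tb_eq (hβ : 0 < β) {y : ℝ} (hy : y ∈ Ico (0 : ℝ) 1) (a : ℕ) :
    ∀ (l : ℕ) {z : ℝ}, 0 ≤ z → a < dig β z l →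
      ∃ x, 0 ≤ x ∧ x < z ∧ (∀ i < l, dig β x i = dig β z i) ∧ dig β x l = a ∧
        (Tb β)^[l + 1] x = y
  | 0, z, hz, ha => by
    obtain ⟨hdig, hTb⟩ := dig_zero_div_and_Tb_div hβ a hy
    have hz' : (a : ℝ) + 1 ≤ β * z := by
      rw [mul_eq_dig_add_Tb hβ.le hz]
      have : (a : ℝ) + 1 ≤ dig β z 0 := by exact_mod_cast ha
      linarith [(Tb_mem_Ico β z).1]
    refine ⟨(a + y) / β, by have := hy.1; positivity, ?_, nofun, hdig, by simpa using hTb⟩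
    rw [div_lt_iff₀' hβ]
    linarith [hy.2]
  | n + 1, z, hz, ha => by
    rw [dig_succ] at ha
    obtain ⟨x', hx', hx'z, hd, hdn, hit⟩ :=
      exists_lt_dig_eq_iterate_Tb_eq hβ hy a n (Tb_mem_Ico β z).1 ha
    obtain ⟨hdig, hTb⟩ := dig_zero_div_and_Tb_div hβ (dig β z 0) ⟨hx', hx'z.trans (Tb_mem_Ico β z).2⟩
    refine ⟨(dig β z 0 + x') / β, by positivity, ?_, ?_, by rw [dig_succ, hTb, hdn], ?_⟩
    · rw [div_lt_iff₀' hβ, mul_eq_dig_add_Tb hβ.le hz]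
      linarith
    · rintro (_ | i) hi
      · exact hdig
      · rw [dig_succ, dig_succ, hTb, hd i (by omega)]
    · rw [Function.iterate_succ_apply, hTb, hit]

end Monotonicity

section Cylinders

variable {β : ℝ}

lemma full_iff_Ico_subset {w : List ℕ} :
    Full β w ↔ Ico 0 1 ⊆ (Tb β)^[w.length] '' cyl β w := by
  refine ⟨fun h => h.ge, fun h => h.antisymm' ?_⟩
  rintro _ ⟨x, hx, rfl⟩
  exact iterate_Tb_mem_Ico hx.1 _

lemma mem_cyl_append_iff {u v : List ℕ} {x : ℝ} :
    x ∈ cyl β (u ++ v) ↔ x ∈ cyl β u ∧ (Tb β)^[u.length] x ∈ cyl β v := by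
  constructor
  · rintro ⟨hx, hd⟩
    refine ⟨⟨hx, fun i hi => ?_⟩, iterate_Tb_mem_Ico hx _, fun i hi => ?_⟩
    · have := hd i (by simp; omega)
      rwa [List.getElem_append_left hi] at this
    · have := hd (u.length + i) (by simp; omega)
      rw [← dig_add]
      simpa using this
  · rintro ⟨⟨hx, hu⟩, -, hv⟩
    refine ⟨hx, fun i hi => ?_⟩
    rcases lt_or_ge i u.length with h | h
    · rw [List.getElem_append_left h, hu]
    · rw [List.getElem_append_right h, hv _ (by simp at hi; omega), ← dig_add,
        Nat.add_sub_cancel' h]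

lemma image_iterate_cyl_append {u : List ℕ} (hu : Full β u) (v : List ℕ) :
    (Tb β)^[u.length] '' cyl β (u ++ v) = cyl β v := by
  refine subset_antisymm ?_ fun y hy => ?_
  · rintro _ ⟨x, hx, rfl⟩
    exact (mem_cyl_append_iff.1 hx).2
  · obtain ⟨x, hx, rfl⟩ : y ∈ (Tb β)^[u.length] '' cyl β u := hu ▸ hy.1
    exact ⟨x, mem_cyl_append_iff.2 ⟨hx, hy⟩, rfl⟩

lemma Full.append_iff {u : List ℕ} (hu : Full β u) (v : List ℕ) :
    Full β (u ++ v) ↔ Full β v := by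
  rw [Full, Full, List.length_append, Nat.add_comm, Function.iterate_add, image_comp,
    image_iterate_cyl_append hu]

lemma mem_cyl_ofFn_append_iff {m : ℕ} {f : Fin m → ℕ} {a : ℕ} {x : ℝ} :
    x ∈ cyl β (List.ofFn f ++ [a]) ↔
      x ∈ Ico (0 : ℝ) 1 ∧ (∀ i : Fin m, dig β x i = f i) ∧ dig β x m = a := by
  simp only [cyl, mem_ofPred_eq, List.length_append, List.length_ofFn, List.length_singleton]
  refine and_congr_right fun _ => ⟨fun h => ⟨fun i => ?_, ?_⟩, fun ⟨hf, ha⟩ i hi => ?_⟩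
  · simpa using (h i (by omega)).symm
  · simpa using (h m (by omega)).symm
  · rcases lt_or_ge i m with him | him
    · rw [List.getElem_append_left (by simpa using him), List.getElem_ofFn]
      exact (hf ⟨i, him⟩).symm
    · obtain rfl : i = m := by omega
      simpa using ha.symm

end Cylinders

section PrefixOfOne

variable {β : ℝ}

lemma not_full_ofFn_dig_one_append (hβ : 0 < β) (m : ℕ) :
    ¬ Full β (List.ofFn (fun i : Fin m => dig β 1 i) ++ [dig β 1 m]) := by
  rw [full_iff_Ico_subset]
  intro h
  obtain ⟨x, hx, hxT⟩ := h (iterate_Tb_mem_Ico (β := β) (Tb_mem_Ico β 1) m)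
  obtain ⟨hx01, hpre, hlast⟩ := mem_cyl_ofFn_append_iff.1 hx
  have hd : ∀ i < m + 1, dig β x i = dig β 1 i := fun i hi => by
    rcases lt_or_ge i m with him | him
    · exact hpre ⟨i, him⟩
    · obtain rfl : i = m := by omega
      exact hlast
  have hlt := iterate_Tb_lt_of_dig_eq hβ hx01.1 zero_le_one hx01.2 (m + 1) hd
  simp only [List.length_append, List.length_ofFn, List.length_singleton] at hxT
  rw [hxT, ← Function.iterate_succ_apply] at hlt
  exact hlt.false

lemma full_ofFn_dig_one_append (hβ : 0 < β) {m a : ℕ} (ha : a < dig β 1 m) :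
    Full β (List.ofFn (fun i : Fin m => dig β 1 i) ++ [a]) := by
  rw [full_iff_Ico_subset]
  intro y hy
  obtain ⟨x, hx0, hx1, hpre, hlast, hxy⟩ :=
    exists_lt_dig_eq_iterate_Tb_eq hβ hy a m zero_le_one ha
  refine ⟨x, mem_cyl_ofFn_append_iff.2 ⟨⟨hx0, hx1⟩, fun i => hpre i i.2, hlast⟩, ?_⟩
  simpa using hxy

lemma full_ofFn_dig_one_append_iff (hβ : 0 < β) {m a : ℕ} (ha : a ≤ dig β 1 m) :
    Full β (List.ofFn (fun i : Fin m => dig β 1 i) ++ [a]) ↔ a < dig β 1 m := by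
  refine ⟨fun h => ha.lt_of_ne ?_, full_ofFn_dig_one_append hβ⟩
  rintro rfl
  exact not_full_ofFn_dig_one_append hβ m h

end PrefixOfOne

theorem stmt10_general (β : ℝ) (hβ : 1 < β) (w u ws : List ℕ) (l a : ℕ)
    (hws : ws = List.ofFn (fun i : Fin (l-1) => dig β 1 i) ++ [a])
    (ha : a ≤ dig β 1 (l-1))
    (hdec : w = u ++ ws) (hu : Full β u) :
    (Full β w ↔ Full β ws) ∧ (Full β w ↔ a < dig β 1 (l-1)) := by
  have hfull : Full β w ↔ Full β ws := hdec ▸ hu.append_iff ws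
  exact ⟨hfull, hfull.trans (hws ▸ full_ofFn_dig_one_append_iff (by linarith) ha)⟩

/-- structural criterion of fullness — with canonical suffix
w* = ε₁⋯ε_{l−1}wₙ (wₙ ≤ ε_l), w is full iff w* is full iff wₙ < ε_l. -/
theorem stmt10 (β : ℝ) (hβ : 1 < β) (w u ws : List ℕ) (l a : ℕ) (hl : 1 ≤ l)
    (hws : ws = List.ofFn (fun i : Fin (l-1) => dig β 1 i) ++ [a])
    (ha : a ≤ dig β 1 (l-1))
    (hdec : w = u ++ ws) (hu : Full β u) (h : Adm β w) :
    (Full β w ↔ Full β ws) ∧ (Full β w ↔ a < dig β 1 (l-1)) :=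
  stmt10_general β hβ w u ws l a hws ha hdec hu
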